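/- arXiv:2511.03688 — 4 statements merged into one kernel-verified Lean document; each statement's English description precedes it below -/
import Mathlib

section
/- Define ρ : (0,∞) → ℝ by ρ(ν) = 2(1 + 2√ν)/(9(1 + √ν)²(1 + ν)²) for 0 < ν ≤ 4 and ρ(ν) = (3ν² − 8)/(36(ν² − 1)²) for ν > 4. Then ρ is strictly positive, bounded, continuous, and strictly decreasing on (0,∞). -/
open Real Set

noncomputable def rhoS4 : ℝ → ℝ := fun ν =>
  if ν ≤ 4 then 2 * (1 + 2 * Real.sqrt ν) / (9 * (1 + Real.sqrt ν) ^ 2 * (1 + ν) ^ 2)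
  else (3 * ν ^ 2 - 8) / (36 * (ν ^ 2 - 1) ^ 2)

noncomputable def Ffun : ℝ → ℝ := fun t => 2 * (1 + 2 * t) / (9 * (1 + t) ^ 2 * (1 + t ^ 2) ^ 2)
noncomputable def Gfun : ℝ → ℝ := fun x => (3 * x ^ 2 - 8) / (36 * (x ^ 2 - 1) ^ 2)

lemma F_hasDeriv {t : ℝ} (ht : 0 ≤ t) :
    HasDerivAt Ffun (-(36 * t * (1 + t) * (1 + t ^ 2) * (3 + 6 * t + 5 * t ^ 2)) /
      (9 * ((1 + t) ^ 2 * (1 + t ^ 2) ^ 2)) ^ 2) t := by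
  have hden : (9 : ℝ) * ((1 + t) ^ 2 * (1 + t ^ 2) ^ 2) ≠ 0 := by positivity
  have h1 : HasDerivAt (fun x : ℝ => 2 * (1 + 2 * x)) 4 t := by
    have := (((hasDerivAt_id t).const_mul (2:ℝ)).const_add 1).const_mul 2
    norm_num at this; exact this
  have h2 : HasDerivAt (fun x : ℝ => (1 + x) ^ 2) (2 * (1 + t) ^ 1 * 1) t :=
    ((hasDerivAt_id t).const_add 1).pow 2
  have h3 : HasDerivAt (fun x : ℝ => (1 + x ^ 2) ^ 2) (2 * (1 + t ^ 2) ^ 1 * (2 * t ^ 1)) t :=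
    ((hasDerivAt_pow 2 t).const_add 1).pow 2
  have h5 := h1.div ((h2.mul h3).const_mul (9:ℝ)) hden
  have hF : Ffun = fun y : ℝ => 2 * (1 + 2 * y) / (9 * ((1 + y) ^ 2 * (1 + y ^ 2) ^ 2)) :=
    funext fun y => by simp only [Ffun]; ring
  rw [hF]
  exact h5.congr_deriv (by simp only [Pi.mul_apply]; ring)

lemma G_hasDeriv {x : ℝ} (hx : 4 ≤ x) :
    HasDerivAt Gfun ((6 * x * (36 * (x ^ 2 - 1) ^ 2) -
      (3 * x ^ 2 - 8) * (36 * (2 * (x ^ 2 - 1) ^ 1 * (2 * x ^ 1)))) /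
      (36 * (x ^ 2 - 1) ^ 2) ^ 2) x := by
  have h1 : (0:ℝ) < x ^ 2 - 1 := by nlinarith
  have hden : (36 : ℝ) * (x ^ 2 - 1) ^ 2 ≠ 0 := ne_of_gt (mul_pos (by norm_num) (pow_pos h1 2))
  have hu : HasDerivAt (fun y : ℝ => 3 * y ^ 2 - 8) (6 * x) x := by
    have := ((hasDerivAt_pow 2 x).const_mul (3:ℝ)).sub_const 8
    norm_num at this
    exact (this.sub_const 8).congr_deriv (by ring)
  have hv : HasDerivAt (fun y : ℝ => 36 * (y ^ 2 - 1) ^ 2)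
      (36 * (2 * (x ^ 2 - 1) ^ 1 * (2 * x ^ 1))) x :=
    (((hasDerivAt_pow 2 x).sub_const 1).pow 2).const_mul 36
  exact hu.div hv hden

lemma F_anti : StrictAntiOn Ffun (Ici 0) := by
  apply strictAntiOn_of_deriv_neg (convex_Ici 0)
  · exact fun x hx => ((F_hasDeriv hx).continuousAt).continuousWithinAt
  · intro x hx
    rw [interior_Ici] at hx
    have hx' : (0:ℝ) < x := hx
    rw [(F_hasDeriv (le_of_lt hx')).deriv]
    apply div_neg_of_neg_of_pos
    · have h1 : (0:ℝ) < 36 * x * (1 + x) * (1 + x ^ 2) * (3 + 6 * x + 5 * x ^ 2) :=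
        mul_pos (mul_pos (mul_pos (by linarith) (by linarith)) (by positivity)) (by positivity)
      linarith
    · have h2 : (0:ℝ) < 9 * ((1 + x) ^ 2 * (1 + x ^ 2) ^ 2) :=
        mul_pos (by norm_num) (mul_pos (pow_pos (by linarith) 2) (pow_pos (by positivity) 2))
      exact pow_pos h2 2

lemma G_anti : StrictAntiOn Gfun (Ici 4) := by
  apply strictAntiOn_of_deriv_neg (convex_Ici 4)
  · exact fun x hx => ((G_hasDeriv hx).continuousAt).continuousWithinAt
  · intro x hx
    rw [interior_Ici] at hx
    have hx' : (4:ℝ) < x := hx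
    rw [(G_hasDeriv (le_of_lt hx')).deriv]
    have h1 : (0:ℝ) < x ^ 2 - 1 := by nlinarith
    apply div_neg_of_neg_of_pos
    · have key : 6 * x * (36 * (x ^ 2 - 1) ^ 2) -
          (3 * x ^ 2 - 8) * (36 * (2 * (x ^ 2 - 1) ^ 1 * (2 * x ^ 1))) =
          -(72 * (x * ((x ^ 2 - 1) * (3 * x ^ 2 - 13)))) := by ring
      rw [key, neg_neg_iff_pos]
      exact mul_pos (by norm_num) (mul_pos (by linarith) (mul_pos h1 (by nlinarith)))
    · exact pow_pos (mul_pos (by norm_num) (pow_pos h1 2)) 2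

lemma rho_eqF {ν : ℝ} (h0 : 0 ≤ ν) (h4 : ν ≤ 4) : rhoS4 ν = Ffun (Real.sqrt ν) := by
  have hs : Real.sqrt ν ^ 2 = ν := Real.sq_sqrt h0
  simp only [rhoS4, Ffun, if_pos h4, hs]

lemma sqrt_four : Real.sqrt 4 = 2 := by
  rw [show (4:ℝ) = 2 ^ 2 by norm_num, Real.sqrt_sq (by norm_num : (0:ℝ) ≤ 2)]

lemma rho_four : rhoS4 4 = Gfun 4 := by
  rw [rho_eqF (by norm_num) le_rfl, sqrt_four]
  simp only [Ffun, Gfun]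
  norm_num

lemma rho_eqG {ν : ℝ} (h : 4 ≤ ν) : rhoS4 ν = Gfun ν := by
  rcases eq_or_lt_of_le h with h' | h'
  · rw [← h']; exact rho_four
  · simp only [rhoS4, Gfun, if_neg (not_le.mpr h')]

theorem radius_properties :
    (∀ ν ∈ Set.Ioi (0 : ℝ), 0 < rhoS4 ν) ∧
    (∃ B : ℝ, ∀ ν ∈ Set.Ioi (0 : ℝ), rhoS4 ν ≤ B) ∧
    ContinuousOn rhoS4 (Set.Ioi 0) ∧
    StrictAntiOn rhoS4 (Set.Ioi 0) := by
  have hFpos : ∀ t : ℝ, 0 ≤ t → 0 < Ffun t := by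
    intro t ht
    simp only [Ffun]
    positivity
  have hGpos : ∀ x : ℝ, 4 < x → 0 < Gfun x := by
    intro x hx
    simp only [Gfun]
    apply div_pos (by nlinarith)
    have h1 : (0:ℝ) < x ^ 2 - 1 := by nlinarith
    positivity
  refine ⟨?_, ?_, ?_, ?_⟩
  · -- positivity
    intro ν hν
    rcases le_or_gt ν 4 with h | h
    · rw [rho_eqF (le_of_lt hν) h]; exact hFpos _ (Real.sqrt_nonneg ν)
    · rw [rho_eqG h.le]; exact hGpos _ h
  · -- boundedness
    refine ⟨2/9, fun ν hν => ?_⟩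
    rcases le_or_gt ν 4 with h | h
    · rw [rho_eqF (le_of_lt hν) h]
      set t := Real.sqrt ν with ht
      have ht0 : 0 ≤ t := Real.sqrt_nonneg ν
      simp only [Ffun]
      rw [div_le_div_iff₀ (by positivity) (by norm_num)]
      nlinarith [sq_nonneg t, sq_nonneg (t^2), mul_nonneg ht0 (sq_nonneg t)]
    · rw [rho_eqG h.le]
      simp only [Gfun]
      have h1 : (0:ℝ) < ν ^ 2 - 1 := by nlinarith
      rw [div_le_div_iff₀ (by positivity) (by norm_num)]
      nlinarith [sq_nonneg (ν^2-1)]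
  · -- continuity
    intro x hx
    have hFc : ∀ y : ℝ, 0 ≤ y → ContinuousAt (fun z => Ffun (Real.sqrt z)) y := by
      intro y hy
      have hs : ContinuousAt Real.sqrt y := Real.continuous_sqrt.continuousAt
      have hden : (9:ℝ) * (1 + Real.sqrt y) ^ 2 * (1 + Real.sqrt y ^ 2) ^ 2 ≠ 0 := by
        have := Real.sqrt_nonneg y
        positivity
      have hFcont : ContinuousAt
          (fun t : ℝ => 2 * (1 + 2 * t) / (9 * (1 + t) ^ 2 * (1 + t ^ 2) ^ 2)) (Real.sqrt y) :=
        ContinuousAt.div (by fun_prop) (by fun_prop) hden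
      exact hFcont.comp hs
    have hGc : ∀ y : ℝ, 4 ≤ y → ContinuousAt Gfun y := by
      intro y hy
      have h1 : (0:ℝ) < y ^ 2 - 1 := by nlinarith
      have : ContinuousAt (fun x : ℝ => (3 * x ^ 2 - 8) / (36 * (x ^ 2 - 1) ^ 2)) y :=
        ContinuousAt.div (by fun_prop) (by fun_prop)
          (ne_of_gt (mul_pos (by norm_num) (pow_pos h1 2)))
      exact this
    rcases lt_trichotomy x 4 with h | h | h
    · -- x < 4
      have : ContinuousAt rhoS4 x := by
        apply ((hFc x (le_of_lt hx)).congr)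
        have hmem : Ioo (0:ℝ) 4 ∈ nhds x := Ioo_mem_nhds hx h
        filter_upwards [hmem] with y hy
        exact (rho_eqF hy.1.le hy.2.le).symm
      exact this.continuousWithinAt
    · -- x = 4
      subst h
      have hA : ContinuousWithinAt rhoS4 (Icc 0 4) 4 := by
        apply ((hFc 4 (by norm_num)).continuousWithinAt).congr
        · exact fun y hy => rho_eqF hy.1 hy.2
        · exact rho_eqF (by norm_num) le_rfl
      have hB : ContinuousWithinAt rhoS4 (Ici 4) 4 := by
        apply ((hGc 4 le_rfl).continuousWithinAt).congr
        · exact fun y hy => rho_eqG hy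
        · exact rho_eqG le_rfl
      exact (hA.union hB).mono (fun y hy => by
        rcases le_or_gt y 4 with h' | h'
        · exact Or.inl ⟨le_of_lt hy, h'⟩
        · exact Or.inr h'.le)
    · -- 4 < x
      have : ContinuousAt rhoS4 x := by
        apply (hGc x h.le).congr
        filter_upwards [Ioi_mem_nhds h] with y hy
        exact (rho_eqG hy.le).symm
      exact this.continuousWithinAt
  · -- strict anti
    intro a ha b hb hab
    have ha0 : (0:ℝ) < a := ha
    have hb0 : (0:ℝ) < b := hb
    rcases le_or_gt b 4 with hb4 | hb4
    · rw [rho_eqF ha0.le (hab.le.trans hb4), rho_eqF hb0.le hb4]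
      exact F_anti (Real.sqrt_nonneg a) (Real.sqrt_nonneg b)
        ((Real.sqrt_lt_sqrt ha0.le hab))
    · rcases le_or_gt a 4 with ha4 | ha4
      · have h1 : Gfun 4 > Gfun b := G_anti self_mem_Ici hb4.le hb4
        have h2 : rhoS4 4 ≤ rhoS4 a := by
          rw [rho_eqF ha0.le ha4, rho_eqF (by norm_num) le_rfl]
          apply F_anti.antitoneOn (Real.sqrt_nonneg a) (Real.sqrt_nonneg 4)
          exact Real.sqrt_le_sqrt ha4
        rw [rho_eqG hb4.le]
        calc Gfun b < Gfun 4 := h1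
          _ = rhoS4 4 := rho_four.symm
          _ ≤ rhoS4 a := h2
      · rw [rho_eqG ha4.le, rho_eqG hb4.le]
        exact G_anti ha4.le (hab.le.trans' ha4.le) hab
end

section
/- The polynomial P₂(ν,z) = 81(ν² − 1)²(ν + 1)² z² + 36(3ν − 1)(ν + 1)² z + 4 − 16ν, viewed as a quadratic in z with ν ∈ (0,4) fixed, ν ≠ 1, has ρ(ν) := 2(1 + 2√ν)/(9(1 + √ν)²(1 + ν)²) as a root: P₂(ν, ρ(ν)) = 0. -/
open Real Set

theorem P2_vanishes_at_rho :
    ∀ ν ∈ Set.Ioo (0 : ℝ) 4, ν ≠ 1 →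
      81 * (ν ^ 2 - 1) ^ 2 * (ν + 1) ^ 2 *
          (2 * (1 + 2 * Real.sqrt ν) / (9 * (1 + Real.sqrt ν) ^ 2 * (1 + ν) ^ 2)) ^ 2 +
        36 * (3 * ν - 1) * (ν + 1) ^ 2 *
          (2 * (1 + 2 * Real.sqrt ν) / (9 * (1 + Real.sqrt ν) ^ 2 * (1 + ν) ^ 2)) +
        4 - 16 * ν = 0 := by
  intro ν hν _
  have hs0 : 0 ≤ Real.sqrt ν := Real.sqrt_nonneg ν
  have hs2 : Real.sqrt ν ^ 2 = ν := Real.sq_sqrt hν.1.le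
  set s := Real.sqrt ν with hs
  have h1 : (1 + s) ≠ 0 := by positivity
  have h2 : (1 + ν) ≠ 0 := by nlinarith [hν.1]
  have h2' : (1 + s ^ 2) ≠ 0 := by positivity
  rw [← hs2]
  field_simp
  ring
end

section
/- Let Z(c,z) = Σ_{n≥1} Z_n(c) zⁿ be a power series where Z_n(c) = Σ_{k=0}^{n} a_{n,k} c^{2k−n} with a_{n,k} ≥ 0 (so exponents of c lie in [−n, n]). Let ρ(c) denote the radius of convergence in z of z ↦ Z(c, c·z). Then for 0 < c₁ ≤ c₂: ρ(c₁) ≥ ρ(c₂) ≥ (c₁/c₂)² ρ(c₁). Consequently c ↦ ρ(c) is continuous on (0,∞). -/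
open Finset Set

/-- The radius of convergence of a real power series with coefficients `f`. -/
noncomputable def seriesRadius (f : ℕ → ℝ) : ENNReal :=
  ⨆ (r : NNReal) (_ : ∃ C : ℝ, ∀ n : ℕ, |f n| * (r : ℝ) ^ n ≤ C), (r : ENNReal)

lemma seriesRadius_mono {f g : ℕ → ℝ} (h : ∀ n, |f n| ≤ |g n|) :
    seriesRadius g ≤ seriesRadius f := by
  refine iSup_le fun r => iSup_le fun hC => ?_
  obtain ⟨C, hC⟩ := hC
  refine le_iSup_of_le r (le_iSup_of_le ⟨C, fun n => ?_⟩ le_rfl)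
  exact le_trans (mul_le_mul_of_nonneg_right (h n) (by positivity)) (hC n)

lemma seriesRadius_le_mul {f g : ℕ → ℝ} {M : ℝ} (hM : 0 < M)
    (h : ∀ n, |f n| ≤ M ^ n * |g n|) :
    seriesRadius g ≤ ENNReal.ofReal M * seriesRadius f := by
  refine iSup_le fun r => iSup_le fun hC => ?_
  obtain ⟨C, hC⟩ := hC
  set r' : NNReal := r / M.toNNReal with hr'def
  have hr' : (r' : ℝ) = (r : ℝ) / M := by
    simp [hr'def, NNReal.coe_div, Real.coe_toNNReal _ hM.le]
  have hmem : ∃ C : ℝ, ∀ n, |f n| * (r' : ℝ) ^ n ≤ C := by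
    refine ⟨C, fun n => ?_⟩
    have h1 : |f n| * (r' : ℝ) ^ n ≤ (M ^ n * |g n|) * ((r : ℝ) / M) ^ n := by
      rw [hr']; exact mul_le_mul_of_nonneg_right (h n) (by positivity)
    have h2 : (M ^ n * |g n|) * ((r : ℝ) / M) ^ n = |g n| * (r : ℝ) ^ n := by
      rw [div_pow, mul_comm (M ^ n), mul_assoc, mul_div_assoc', mul_div_cancel_left₀ _ (pow_ne_zero n hM.ne')]
    rw [h2] at h1
    exact h1.trans (hC n)
  have hle : (r' : ENNReal) ≤ seriesRadius f :=
    le_iSup_of_le r' (le_iSup_of_le hmem le_rfl)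
  have key : (r : ENNReal) = ENNReal.ofReal M * (r' : ENNReal) := by
    rw [← ENNReal.ofReal_coe_nnreal, ← ENNReal.ofReal_coe_nnreal,
      ← ENNReal.ofReal_mul hM.le, hr', mul_div_cancel₀ _ hM.ne']
  rw [key]
  exact mul_le_mul_right hle _

theorem radius_sandwich_and_continuity
    (a : ℕ → ℕ → ℝ) (ha : ∀ n k, 0 ≤ a n k)
    (Z : ℝ → ℕ → ℝ)
    (hZ : ∀ c n, Z c n = ∑ k ∈ Finset.range (n + 1), a n k * c ^ (2 * (k : ℤ) - n))
    (ρ : ℝ → ENNReal)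
    (hρ : ∀ c, ρ c = seriesRadius (fun n => Z c n * c ^ n)) :
    (∀ c₁ c₂ : ℝ, 0 < c₁ → c₁ ≤ c₂ →
        ρ c₂ ≤ ρ c₁ ∧ ENNReal.ofReal ((c₁ / c₂) ^ 2) * ρ c₁ ≤ ρ c₂) ∧
    ContinuousOn ρ (Set.Ioi 0) := by
  -- The normalized coefficients: Z c n * c^n = ∑ a n k * c^(2k)
  set S : ℝ → ℕ → ℝ := fun c n => ∑ k ∈ Finset.range (n + 1), a n k * c ^ (2 * k) with hS
  have hZS : ∀ c : ℝ, 0 < c → ∀ n, Z c n * c ^ n = S c n := by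
    intro c hc n
    rw [hZ, Finset.sum_mul]
    refine Finset.sum_congr rfl fun k _ => ?_
    rw [mul_assoc]
    congr 1
    rw [← zpow_natCast c n, ← zpow_add₀ hc.ne']
    have : 2 * (k : ℤ) - n + n = ((2 * k : ℕ) : ℤ) := by push_cast; ring
    rw [this, zpow_natCast]
  have hSnn : ∀ c : ℝ, 0 < c → ∀ n, 0 ≤ S c n := by
    intro c hc n
    exact Finset.sum_nonneg fun k _ => mul_nonneg (ha n k) (by positivity)
  -- The sandwich inequalities
  have main : ∀ c₁ c₂ : ℝ, 0 < c₁ → c₁ ≤ c₂ →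
      ρ c₂ ≤ ρ c₁ ∧ ENNReal.ofReal ((c₁ / c₂) ^ 2) * ρ c₁ ≤ ρ c₂ := by
    intro c₁ c₂ h1 h12
    have h2 : 0 < c₂ := h1.trans_le h12
    have habs1 : ∀ n, |Z c₁ n * c₁ ^ n| = S c₁ n := fun n => by
      rw [hZS c₁ h1, abs_of_nonneg (hSnn c₁ h1 n)]
    have habs2 : ∀ n, |Z c₂ n * c₂ ^ n| = S c₂ n := fun n => by
      rw [hZS c₂ h2, abs_of_nonneg (hSnn c₂ h2 n)]
    constructor
    · -- monotone coefficients give ρ c₂ ≤ ρ c₁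
      rw [hρ, hρ]
      refine seriesRadius_mono fun n => ?_
      rw [habs1, habs2]
      refine Finset.sum_le_sum fun k _ => ?_
      exact mul_le_mul_of_nonneg_left (pow_le_pow_left₀ h1.le h12 _) (ha n k)
    · -- the other direction
      have hd1 : 1 ≤ c₂ / c₁ := (one_le_div h1).2 h12
      have hM : (0:ℝ) < (c₂ / c₁) ^ 2 := by positivity
      have key : ∀ n, |Z c₂ n * c₂ ^ n| ≤ ((c₂ / c₁) ^ 2) ^ n * |Z c₁ n * c₁ ^ n| := by
        intro n
        rw [habs1, habs2, hS]
        simp only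
        rw [Finset.mul_sum]
        refine Finset.sum_le_sum fun k hk => ?_
        have hkn : k ≤ n := Nat.lt_succ_iff.mp (Finset.mem_range.mp hk)
        have hc2 : c₂ ^ (2 * k) = c₁ ^ (2 * k) * (c₂ / c₁) ^ (2 * k) := by
          rw [← mul_pow, mul_div_cancel₀ _ h1.ne']
        have hkle : (c₂ / c₁) ^ (2 * k) ≤ (c₂ / c₁) ^ (2 * n) :=
          pow_le_pow_right₀ hd1 (by omega)
        calc a n k * c₂ ^ (2 * k) = a n k * (c₁ ^ (2 * k) * (c₂ / c₁) ^ (2 * k)) := by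
              rw [hc2]
          _ ≤ a n k * (c₁ ^ (2 * k) * (c₂ / c₁) ^ (2 * n)) :=
              mul_le_mul_of_nonneg_left
                (mul_le_mul_of_nonneg_left hkle (by positivity)) (ha n k)
          _ = ((c₂ / c₁) ^ 2) ^ n * (a n k * c₁ ^ (2 * k)) := by
              rw [← pow_mul]; ring
      have hrad : ρ c₁ ≤ ENNReal.ofReal ((c₂ / c₁) ^ 2) * ρ c₂ := by
        rw [hρ, hρ]
        exact seriesRadius_le_mul hM key
      have hprod : ENNReal.ofReal ((c₁ / c₂) ^ 2) * ENNReal.ofReal ((c₂ / c₁) ^ 2) = 1 := by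
        rw [← ENNReal.ofReal_mul (by positivity)]
        have : (c₁ / c₂) ^ 2 * (c₂ / c₁) ^ 2 = 1 := by
          field_simp
        rw [this, ENNReal.ofReal_one]
      calc ENNReal.ofReal ((c₁ / c₂) ^ 2) * ρ c₁
          ≤ ENNReal.ofReal ((c₁ / c₂) ^ 2) * (ENNReal.ofReal ((c₂ / c₁) ^ 2) * ρ c₂) :=
            mul_le_mul_right hrad _
        _ = (ENNReal.ofReal ((c₁ / c₂) ^ 2) * ENNReal.ofReal ((c₂ / c₁) ^ 2)) * ρ c₂ := by
            rw [mul_assoc]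
        _ = ρ c₂ := by rw [hprod, one_mul]
  refine ⟨main, ?_⟩
  -- Continuity via squeezing
  have sandwich : ∀ c x : ℝ, 0 < c → 0 < x →
      ENNReal.ofReal ((min c x / max c x) ^ 2) * ρ x ≤ ρ c ∧
      ρ c ≤ ENNReal.ofReal ((max c x / min c x) ^ 2) * ρ x := by
    intro c x hc hx
    rcases le_total c x with h | h
    · rw [min_eq_left h, max_eq_right h]
      obtain ⟨hA, hB⟩ := main c x hc h
      constructor
      · calc ENNReal.ofReal ((c / x) ^ 2) * ρ x ≤ 1 * ρ x := by
              refine mul_le_mul_left ?_ _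
              rw [← ENNReal.ofReal_one]
              refine ENNReal.ofReal_le_ofReal ?_
              have : c / x ≤ 1 := div_le_one_of_le₀ h hx.le
              nlinarith [div_nonneg hc.le hx.le]
          _ = ρ x := one_mul _
          _ ≤ ρ c := hA
      · have hprod : ENNReal.ofReal ((x / c) ^ 2) * ENNReal.ofReal ((c / x) ^ 2) = 1 := by
          rw [← ENNReal.ofReal_mul (by positivity)]
          have : (x / c) ^ 2 * (c / x) ^ 2 = 1 := by field_simp
          rw [this, ENNReal.ofReal_one]
        calc ρ c = 1 * ρ c := (one_mul _).symm
          _ = ENNReal.ofReal ((x / c) ^ 2) * (ENNReal.ofReal ((c / x) ^ 2) * ρ c) := by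
              rw [← mul_assoc, hprod]
          _ ≤ ENNReal.ofReal ((x / c) ^ 2) * ρ x := mul_le_mul_right hB _
    · rw [min_eq_right h, max_eq_left h]
      obtain ⟨hA, hB⟩ := main x c hx h
      refine ⟨hB, ?_⟩
      calc ρ c ≤ ρ x := hA
        _ = 1 * ρ x := (one_mul _).symm
        _ ≤ ENNReal.ofReal ((c / x) ^ 2) * ρ x := by
            refine mul_le_mul_left ?_ _
            rw [← ENNReal.ofReal_one]
            refine ENNReal.ofReal_le_ofReal ?_
            have h1 : 1 ≤ c / x := (one_le_div hx).2 h
            nlinarith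
  intro x hx
  have hx' : (0:ℝ) < x := hx
  -- scalar continuity
  have hcontmin : ContinuousAt (fun c : ℝ => (min c x / max c x) ^ 2) x := by
    refine ContinuousAt.pow ?_ 2
    refine ContinuousAt.div (continuousAt_id.min continuousAt_const)
      (continuousAt_id.max continuousAt_const) ?_
    simp [hx'.ne']
  have hcontmax : ContinuousAt (fun c : ℝ => (max c x / min c x) ^ 2) x := by
    refine ContinuousAt.pow ?_ 2
    refine ContinuousAt.div (continuousAt_id.max continuousAt_const)
      (continuousAt_id.min continuousAt_const) ?_
    simp [hx'.ne']
  have hval : (min x x / max x x) ^ 2 = (1:ℝ) := by simp [div_self hx'.ne']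
  have hval' : (max x x / min x x) ^ 2 = (1:ℝ) := by simp [div_self hx'.ne']
  have hlow : Filter.Tendsto (fun c : ℝ => ENNReal.ofReal ((min c x / max c x) ^ 2) * ρ x)
      (nhdsWithin x (Set.Ioi 0)) (nhds (ρ x)) := by
    have h1 : Filter.Tendsto (fun c : ℝ => ENNReal.ofReal ((min c x / max c x) ^ 2))
        (nhdsWithin x (Set.Ioi 0)) (nhds 1) := by
      have := (ENNReal.continuous_ofReal.continuousAt.comp hcontmin).tendsto
      simp only [Function.comp, hval, ENNReal.ofReal_one] at this
      exact this.mono_left nhdsWithin_le_nhds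
    have := ENNReal.Tendsto.mul_const (b := ρ x) h1 (Or.inl one_ne_zero)
    simpa using this
  have hhigh : Filter.Tendsto (fun c : ℝ => ENNReal.ofReal ((max c x / min c x) ^ 2) * ρ x)
      (nhdsWithin x (Set.Ioi 0)) (nhds (ρ x)) := by
    have h1 : Filter.Tendsto (fun c : ℝ => ENNReal.ofReal ((max c x / min c x) ^ 2))
        (nhdsWithin x (Set.Ioi 0)) (nhds 1) := by
      have := (ENNReal.continuous_ofReal.continuousAt.comp hcontmax).tendsto
      simp only [Function.comp, hval', ENNReal.ofReal_one] at this
      exact this.mono_left nhdsWithin_le_nhds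
    have := ENNReal.Tendsto.mul_const (b := ρ x) h1 (Or.inl one_ne_zero)
    simpa using this
  exact tendsto_of_tendsto_of_tendsto_of_le_of_le' hlow hhigh
    (Filter.eventually_of_mem self_mem_nhdsWithin fun c hc => (sandwich c x hc hx').1)
    (Filter.eventually_of_mem self_mem_nhdsWithin fun c hc => (sandwich c x hc hx').2)
end

section
/- For ν ∈ (0,4), define S⋆(ν) = 1/(3(√ν+1)(ν+1)) and ρ(ν) = 2(1+2√ν)/(9(1+√ν)²(1+ν)²). Then the pair (z,S) = (ρ(ν), S⋆(ν)) satisfies the Lagrangian equation z·(1 − 9(1−ν²)²S²)² = S·(1 − 3ν²·2·S − 3(1−ν²)(3ν²+7)S² + 135(1−ν²)³S⁴ − 243(1−ν²)⁵S⁶) obtained from equation (2.2) with c = 1. -/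
set_option maxHeartbeats 1000000


open Real Set

theorem lagrangian_identity_subcritical :
    ∀ ν ∈ Set.Ioo (0 : ℝ) 4,
      let S := 1 / (3 * (Real.sqrt ν + 1) * (ν + 1))
      let z := 2 * (1 + 2 * Real.sqrt ν) / (9 * (1 + Real.sqrt ν) ^ 2 * (1 + ν) ^ 2)
      z * (1 - 9 * (1 - ν ^ 2) ^ 2 * S ^ 2) ^ 2 =
        S * (1 - 6 * ν ^ 2 * S - 3 * (1 - ν ^ 2) * (3 * ν ^ 2 + 7) * S ^ 2 +
          135 * (1 - ν ^ 2) ^ 3 * S ^ 4 - 243 * (1 - ν ^ 2) ^ 5 * S ^ 6) := by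
  rintro ν ⟨h0, h4⟩
  obtain ⟨s, hs0, rfl⟩ : ∃ s : ℝ, 0 < s ∧ s ^ 2 = ν :=
    ⟨Real.sqrt ν, Real.sqrt_pos.mpr h0, Real.sq_sqrt h0.le⟩
  intro S z
  have hsq : Real.sqrt (s ^ 2) = s := Real.sqrt_sq hs0.le
  have h1 : s + 1 ≠ 0 := by positivity
  have h2 : s ^ 2 + 1 ≠ 0 := by positivity
  have h3 : (1:ℝ) + s ≠ 0 := by positivity
  have h4' : (1:ℝ) + s ^ 2 ≠ 0 := by positivity
  simp only [S, z, hsq]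
  field_simp
  ring
end
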